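/- Let H be a complex Hilbert space, P a bounded linear operator on H, and ε a real number with 0 < ε < 1/4 such that ‖P² − P‖ < ε. Then ‖(1/(2πi)) ∮_{|ξ−1|=2ε} (1 − ξ)(ξ·I − P)⁻¹ dξ‖ ≤ (4ε/(1 − 4ε))·(‖P‖ + 2ε), where the circle integral is taken counterclockwise over the circle of center 1 and radius 2ε (on which ξ·I − P is invertible). -/

import Mathlib

/-!
Since `(ξ - P)(P + ξ - 1) = ξ(ξ - 1) - (P² - P)` and `|ξ(ξ - 1)| ≥ 2ε(1 - 2ε) > ε > ‖P² - P‖`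
on the circle `|ξ - 1| = 2ε`, a Neumann series inverts `ξ - P` there with
`‖(ξ - P)⁻¹‖ ≤ (‖P‖ + 2ε) / (2ε(1 - 2ε) - ε)`. The integrand is then bounded by
`2ε (‖P‖ + 2ε) / (ε(1 - 4ε))`, and the contour has length `4πε`.
-/

theorem Commute.inverse_eq_mul_inverse_mul {M₀ : Type*} [MonoidWithZero M₀] {x y : M₀}
    (hxy : Commute x y) (hu : IsUnit (x * y)) : Ring.inverse x = y * Ring.inverse (x * y) := by
  have hx : IsUnit x := (hxy.isUnit_mul_iff.mp hu).1
  calc Ring.inverse x = Ring.inverse x * (x * y) * Ring.inverse (x * y) :=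
        (Ring.mul_inverse_cancel_right _ _ hu).symm
    _ = y * Ring.inverse (x * y) := by rw [Ring.inverse_mul_cancel_left x y hx]

theorem norm_inverse_one_sub_le {A : Type*} [NormedRing A] [HasSummableGeomSeries A]
    (h1 : ‖(1 : A)‖ ≤ 1) {t : A} (ht : ‖t‖ < 1) : ‖Ring.inverse (1 - t)‖ ≤ (1 - ‖t‖)⁻¹ := by
  rw [← geom_series_eq_inverse t ht]
  linarith [tsum_geometric_le_of_norm_lt_one t ht]

section NormedAlgebra

variable {𝕜 A : Type*} [NormedField 𝕜] [NormedRing A] [NormedAlgebra 𝕜 A]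

theorem smul_one_sub_mul_add_smul_one (ξ : 𝕜) (P : A) :
    (ξ • 1 - P) * (P + (ξ - 1) • 1) = (ξ * (ξ - 1)) • 1 - (P ^ 2 - P) := by
  simp only [sub_mul, mul_add, smul_mul_assoc, mul_smul_comm, one_mul, mul_one, sq]
  module

theorem commute_smul_one_sub_add_smul_one (ξ : 𝕜) (P : A) :
    Commute (ξ • 1 - P) (P + (ξ - 1) • 1) := by
  rw [Commute, SemiconjBy, smul_one_sub_mul_add_smul_one]
  simp only [mul_sub, add_mul, smul_mul_assoc, mul_smul_comm, one_mul, mul_one, sq]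
  module

theorem resolvent_eq_inverse_smul_one_sub (P : A) (ξ : 𝕜) :
    resolvent P ξ = Ring.inverse (ξ • 1 - P) := by
  rw [resolvent, Algebra.algebraMap_eq_smul_one]

theorem norm_resolvent_le_of_norm_sq_sub_lt [HasSummableGeomSeries A] (h1 : ‖(1 : A)‖ ≤ 1)
    {P : A} {ξ : 𝕜} (h : ‖P ^ 2 - P‖ < ‖ξ * (ξ - 1)‖) :
    ‖resolvent P ξ‖ ≤ (‖P‖ + ‖ξ - 1‖) / (‖ξ * (ξ - 1)‖ - ‖P ^ 2 - P‖) := by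
  set c := ξ * (ξ - 1)
  have hc : 0 < ‖c‖ := (norm_nonneg _).trans_lt h
  set t := c⁻¹ • (P ^ 2 - P)
  have ht_norm : ‖t‖ = ‖P ^ 2 - P‖ / ‖c‖ := by rw [norm_smul, norm_inv, inv_mul_eq_div]
  have ht : ‖t‖ < 1 := by rwa [ht_norm, div_lt_one hc]
  set y := c⁻¹ • (P + (ξ - 1) • 1)
  have hy : ‖y‖ ≤ ‖c‖⁻¹ * (‖P‖ + ‖ξ - 1‖) := by
    rw [norm_smul, norm_inv]
    gcongr
    refine (norm_add_le _ _).trans ?_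
    gcongr
    exact (norm_smul_le _ _).trans (mul_le_of_le_one_right (norm_nonneg _) h1)
  have hxy : (ξ • 1 - P) * y = 1 - t := by
    rw [mul_smul_comm, smul_one_sub_mul_add_smul_one, smul_sub, smul_smul,
      inv_mul_cancel₀ (norm_pos_iff.mp hc), one_smul]
  have hcomm : Commute (ξ • 1 - P) y := (commute_smul_one_sub_add_smul_one ξ P).smul_right _
  rw [resolvent_eq_inverse_smul_one_sub,
    hcomm.inverse_eq_mul_inverse_mul (hxy ▸ isUnit_one_sub_of_norm_lt_one ht), hxy]
  calc ‖y * Ring.inverse (1 - t)‖ ≤ ‖c‖⁻¹ * (‖P‖ + ‖ξ - 1‖) * (1 - ‖t‖)⁻¹ :=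
        (norm_mul_le _ _).trans (by gcongr; exact norm_inverse_one_sub_le h1 ht)
    _ = (‖P‖ + ‖ξ - 1‖) / (‖c‖ - ‖P ^ 2 - P‖) := by
        rw [ht_norm]
        field_simp [sub_pos.mpr h]

theorem norm_resolvent_le_of_norm_sub_one_eq [HasSummableGeomSeries A] (h1 : ‖(1 : A)‖ ≤ 1)
    {P : A} {ε : ℝ} (hε : ε < 1 / 4) (hP : ‖P ^ 2 - P‖ < ε) {ξ : 𝕜} (hξ : ‖ξ - 1‖ = 2 * ε) :
    ‖resolvent P ξ‖ ≤ (‖P‖ + 2 * ε) / (ε * (1 - 4 * ε)) := by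
  have hε0 : 0 < ε := (norm_nonneg _).trans_lt hP
  have hξ_norm : 1 - 2 * ε ≤ ‖ξ‖ := by
    have := norm_sub_norm_le (1 : 𝕜) ξ
    rw [norm_one, norm_sub_rev, hξ] at this
    linarith
  have hc : 2 * ε * (1 - 2 * ε) ≤ ‖ξ * (ξ - 1)‖ := by
    rw [norm_mul, hξ, mul_comm]
    gcongr
  have hgap : ε * (1 - 4 * ε) < ‖ξ * (ξ - 1)‖ - ‖P ^ 2 - P‖ := by linarith
  calc ‖resolvent P ξ‖ ≤ (‖P‖ + ‖ξ - 1‖) / (‖ξ * (ξ - 1)‖ - ‖P ^ 2 - P‖) :=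
        norm_resolvent_le_of_norm_sq_sub_lt h1 (by nlinarith)
    _ ≤ (‖P‖ + 2 * ε) / (ε * (1 - 4 * ε)) := by
        rw [hξ]
        gcongr
        nlinarith

end NormedAlgebra

theorem stmt7_general {H : Type*} [NormedAddCommGroup H] [InnerProductSpace ℂ H] [CompleteSpace H]
    (P : H →L[ℂ] H) (ε : ℝ) (hε : ε < 1 / 4)
    (hP : ‖P ^ 2 - P‖ < ε) :
    ‖(2 * Real.pi * Complex.I : ℂ)⁻¹ •
        (∮ ξ in C(1, 2 * ε), (1 - ξ) • Ring.inverse (ξ • (1 : H →L[ℂ] H) - P))‖ ≤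
      4 * ε / (1 - 4 * ε) * (‖P‖ + 2 * ε) := by
  have hε0 : 0 < ε := (norm_nonneg _).trans_lt hP
  have hε1 : 0 < 1 - 4 * ε := by linarith
  refine (circleIntegral.norm_two_pi_i_inv_smul_integral_le_of_norm_le_const
    (C := 2 * ε * ((‖P‖ + 2 * ε) / (ε * (1 - 4 * ε)))) (by positivity) fun ξ hξ ↦ ?_).trans_eq ?_
  · rw [mem_sphere_iff_norm] at hξ
    rw [norm_smul, norm_sub_rev, hξ, ← resolvent_eq_inverse_smul_one_sub]
    gcongr
    exact norm_resolvent_le_of_norm_sub_one_eq ContinuousLinearMap.norm_id_le hε hP hξ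
  · field_simp
    ring

/-- Contour estimate: if `‖P² − P‖ < ε` with `0 < ε < 1/4`, then
`‖(2πi)⁻¹ ∮_{|ξ−1|=2ε} (1 − ξ)(ξ·I − P)⁻¹ dξ‖ ≤ (4ε/(1 − 4ε))·(‖P‖ + 2ε)`. -/
theorem stmt7 {H : Type*} [NormedAddCommGroup H] [InnerProductSpace ℂ H] [CompleteSpace H]
    (P : H →L[ℂ] H) (ε : ℝ) (hε0 : 0 < ε) (hε : ε < 1 / 4)
    (hP : ‖P ^ 2 - P‖ < ε) :
    ‖(2 * Real.pi * Complex.I : ℂ)⁻¹ •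
        (∮ ξ in C(1, 2 * ε), (1 - ξ) • Ring.inverse (ξ • (1 : H →L[ℂ] H) - P))‖ ≤
      4 * ε / (1 - 4 * ε) * (‖P‖ + 2 * ε) :=
  stmt7_general P ε hε hP
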